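/- arXiv:1111.7208 — 4 statements merged into one kernel-verified Lean document; each statement's English description precedes it below -/
import Mathlib

section
/- Let L₀ := -Δ_z + α z·∇_z - 2α acting on functions on ℝ^n, with α > 0. Then for k = 0 or k = 2, and any bounded function g with ⟨z⟩^{-k} g bounded, and any r > 0, one has ‖⟨z⟩^{-k} e^{-rL₀} g‖_∞ ≤ C e^{2αr} ‖⟨z⟩^{-k} g‖_∞, where ⟨z⟩ = (1+|z|²)^{1/2} and e^{-rL₀} is the (positivity-preserving) semigroup generated by -L₀. -/
/-!
A positivity-preserving linear map is controlled by its action on a dominating weight: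
`|g| ≤ M φ` gives `|T g| ≤ M T φ`. For `k = 0` the weight is `1`, with `T 1 = e^{2αr}`. For `k = 2`,
write `1 + |z|² = α⁻¹ (α|z|² - n) + (1 + n/α)`; the first summand is fixed by `T` and the second is
multiplied by `e^{2αr} ≥ 1`, so `T(1 + |z|²) ≤ (1 + n/α) e^{2αr} (1 + |z|²)`.
-/

section PositivityPreserving

variable {X : Type*} {T : (X → ℝ) →ₗ[ℝ] (X → ℝ)}

theorem abs_apply_le_mul_apply_of_abs_le
    (hpos : ∀ f g : X → ℝ, (∀ z, f z ≤ g z) → ∀ z, T f z ≤ T g z)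
    {g φ : X → ℝ} {M : ℝ} (hg : ∀ w, |g w| ≤ M * φ w) (z : X) :
    |T g z| ≤ M * T φ z := by
  have hTMφ : T (M • φ) z = M * T φ z := by simp
  rw [abs_le, ← hTMφ]
  constructor
  · have h := hpos (-(M • φ)) g (fun w => by simpa using (abs_le.mp (hg w)).1) z
    simpa using h
  · exact hpos g (M • φ) (fun w => (abs_le.mp (hg w)).2) z

end PositivityPreserving

section QuadraticWeight

variable {X : Type*} [SeminormedAddCommGroup X] {T : (X → ℝ) →ₗ[ℝ] (X → ℝ)} {α c d : ℝ}

theorem apply_one_add_norm_sq (hα : α ≠ 0) (hone : T (fun _ => 1) = fun _ => c)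
    (heig : T (fun z => α * ‖z‖ ^ 2 - d) = fun z => α * ‖z‖ ^ 2 - d) (z : X) :
    T (fun w => 1 + ‖w‖ ^ 2) z = ‖z‖ ^ 2 - d / α + (1 + d / α) * c := by
  have hdecomp : (fun w : X => 1 + ‖w‖ ^ 2) =
      α⁻¹ • (fun w => α * ‖w‖ ^ 2 - d) + (1 + d / α) • fun _ => (1 : ℝ) := by
    funext w
    simp only [Pi.add_apply, Pi.smul_apply, smul_eq_mul]
    field_simp
    ring
  rw [hdecomp, map_add, map_smul, map_smul, heig, hone]
  simp only [Pi.add_apply, Pi.smul_apply, smul_eq_mul]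
  field_simp

theorem apply_one_add_norm_sq_le (hα : 0 < α) (hd : 0 ≤ d) (hc : 1 ≤ c)
    (hone : T (fun _ => 1) = fun _ => c)
    (heig : T (fun z => α * ‖z‖ ^ 2 - d) = fun z => α * ‖z‖ ^ 2 - d) (z : X) :
    T (fun w => 1 + ‖w‖ ^ 2) z ≤ (1 + d / α) * c * (1 + ‖z‖ ^ 2) := by
  rw [apply_one_add_norm_sq hα.ne' hone heig]
  have hdα : 0 ≤ d / α := div_nonneg hd hα.le
  nlinarith [mul_le_mul_of_nonneg_left hc (mul_nonneg hdα (sq_nonneg ‖z‖)), sq_nonneg ‖z‖]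

end QuadraticWeight

/-- Weighted `L^∞` bound for the semigroup `e^{-rL₀}`, `L₀ = -Δ + αz·∇ - 2α`:
for `k = 0, 2`, `‖⟨z⟩^{-k} e^{-rL₀} g‖_∞ ≤ C e^{2αr} ‖⟨z⟩^{-k} g‖_∞`.
The semigroup is encoded abstractly as a positivity-preserving linear map `T`
with `T 1 = e^{2αr} 1` and `T(α|z|² - n) = α|z|² - n`. -/
theorem stmt6 {n : ℕ} (α r : ℝ) (hα : 0 < α) (hr : 0 < r)
    (T : (EuclideanSpace ℝ (Fin n) → ℝ) →ₗ[ℝ] (EuclideanSpace ℝ (Fin n) → ℝ))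
    (hpos : ∀ f g : EuclideanSpace ℝ (Fin n) → ℝ,
      (∀ z, f z ≤ g z) → ∀ z, T f z ≤ T g z)
    (hone : T (fun _ => 1) = fun _ => Real.exp (2 * α * r))
    (heig : T (fun z => α * ‖z‖ ^ 2 - n) = fun z => α * ‖z‖ ^ 2 - n) :
    ∀ k : ℕ, k = 0 ∨ k = 2 →
      ∃ C > 0, ∀ g : EuclideanSpace ℝ (Fin n) → ℝ, ∀ M : ℝ,
        (∀ z, |g z| ≤ M * (1 + ‖z‖ ^ 2) ^ ((k : ℝ) / 2)) →
        ∀ z, |T g z| ≤ C * Real.exp (2 * α * r) * M * (1 + ‖z‖ ^ 2) ^ ((k : ℝ) / 2) := by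
  intro k hk
  set E := Real.exp (2 * α * r)
  have hE : 1 ≤ E := Real.one_le_exp (by positivity)
  have hnα : 0 ≤ (n : ℝ) / α := by positivity
  refine ⟨1 + n / α, by positivity, fun g M hg z => ?_⟩
  set φ := fun w : EuclideanSpace ℝ (Fin n) => (1 + ‖w‖ ^ 2) ^ ((k : ℝ) / 2)
  have hM : 0 ≤ M := nonneg_of_mul_nonneg_left ((abs_nonneg _).trans (hg z)) (by positivity)
  have hTφ : T φ z ≤ (1 + n / α) * E * φ z := by
    rcases hk with rfl | rfl
    · simp only [φ, CharP.cast_eq_zero, zero_div, Real.rpow_zero, mul_one, hone]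
      nlinarith
    · simpa [φ] using apply_one_add_norm_sq_le hα n.cast_nonneg hE hone heig z
  calc |T g z| ≤ M * T φ z := abs_apply_le_mul_apply_of_abs_le hpos hg z
    _ ≤ M * ((1 + n / α) * E * φ z) := mul_le_mul_of_nonneg_left hTφ hM
    _ = (1 + n / α) * E * M * φ z := by ring
end

section
/- Let f : ℝ → ℝ be continuous with e^{αy²/2} f(y) bounded by C⟨y⟩³ and ∫ f(y) y^m dy = 0 for m = 0,1,2 (α > 0). Define iterated antiderivatives f^{(-1)}(x) := ∫_{-∞}^x f, f^{(-m-1)}(x) := ∫_{-∞}^x f^{(-m)}. Then for m = 1,2,3 one has f^{(-m)}(y) = -∫_y^∞ f^{(-m+1)}(x)dx and |f^{(-m)}(y)| ≤ C' e^{-αy²/2} ⟨y⟩^{3-m} for all y. -/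
/-!
Write `w_k(x) = e^{-αx²/2} ⟨x⟩^k`. Far out, `w_k` is dominated by `-(4/α) w_{k-1}'`, so the
tail `∫_y^∞ w_k` is `O(w_{k-1}(y))` for `y ≥ 0`. If `g = O(w_k)` has mean zero, its primitive
`G(y) = ∫_{-∞}^y g = -∫_y^∞ g` is therefore `O(w_{k-1})`: use the left integral for `y ≤ 0` and
the right one for `y ≥ 0`. Integrating `(y^{j+1} G)' = y^{j+1} g + (j + 1) y^j G` over `ℝ`
turns vanishing moments of `g` into vanishing moments of `G`, one order lower, so the moment
conditions on `f` survive exactly as many integrations as the theorem needs.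
-/

open MeasureTheory Real Filter Set Asymptotics
open scoped Topology

/-- `e^{-αx²/2} ⟨x⟩^k`, where `⟨x⟩ = (1 + x²)^{1/2}`. -/
noncomputable def gaussWeight (α k x : ℝ) : ℝ := exp (-(α * x ^ 2 / 2)) * (1 + x ^ 2) ^ (k / 2)

lemma one_add_sq_pos (x : ℝ) : 0 < 1 + x ^ 2 := by positivity

section gaussWeight

variable {α : ℝ}

theorem gaussWeight_pos (α k x : ℝ) : 0 < gaussWeight α k x := by
  have := one_add_sq_pos x
  unfold gaussWeight
  positivity

theorem continuous_gaussWeight (α k : ℝ) : Continuous (gaussWeight α k) :=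
  (by fun_prop : Continuous fun x : ℝ => exp (-(α * x ^ 2 / 2))).mul
    ((by fun_prop : Continuous fun x : ℝ => 1 + x ^ 2).rpow_const
      fun x => Or.inl (one_add_sq_pos x).ne')

theorem gaussWeight_neg (α k x : ℝ) : gaussWeight α k (-x) = gaussWeight α k x := by
  simp [gaussWeight]

theorem gaussWeight_add (α k j x : ℝ) :
    gaussWeight α (k + j) x = (1 + x ^ 2) ^ (j / 2) * gaussWeight α k x := by
  rw [gaussWeight, gaussWeight, add_div, rpow_add (one_add_sq_pos x)]
  ring

theorem tendsto_gaussWeight_cocompact (hα : 0 < α) (k : ℝ) :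
    Tendsto (gaussWeight α k) (cocompact ℝ) (𝓝 0) := by
  have hsq : Tendsto (fun x : ℝ => 1 + x ^ 2) (cocompact ℝ) atTop :=
    tendsto_atTop_add_const_left _ _ <|
      ((tendsto_pow_atTop two_ne_zero).comp tendsto_norm_cocompact_atTop).congr fun x => by simp
  have := ((tendsto_rpow_mul_exp_neg_mul_atTop_nhds_zero (k / 2) (α / 2) (by positivity)).comp
    hsq).const_mul (exp (α / 2))
  rw [mul_zero] at this
  refine this.congr fun x => ?_
  simp only [Function.comp_apply, gaussWeight]
  rw [mul_left_comm, ← exp_add]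
  ring_nf

theorem integrable_gaussWeight (hα : 0 < α) (k : ℝ) : Integrable (gaussWeight α k) := by
  have hO : gaussWeight α k =O[cocompact ℝ] fun x => exp (-(α / 4) * x ^ 2) := by
    refine ((isBigO_refl _ _).mul ((tendsto_gaussWeight_cocompact (α := α / 2) (by positivity)
      k).isBigO_one ℝ)).congr (fun x => ?_) fun x => mul_one _
    simp only [gaussWeight]
    rw [← mul_assoc, ← exp_add]
    ring_nf
  exact (continuous_gaussWeight α k).locallyIntegrable.integrable_of_isBigO_cocompact hO
    ((integrable_exp_neg_mul_sq (by positivity)).integrableAtFilter _)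

theorem hasDerivAt_gaussWeight (α k x : ℝ) :
    HasDerivAt (gaussWeight α k) (x * (k - α * (1 + x ^ 2)) * gaussWeight α (k - 2) x) x := by
  have hexp : HasDerivAt (fun x : ℝ => exp (-(α * x ^ 2 / 2)))
      (exp (-(α * x ^ 2 / 2)) * (-(α * x))) x := by
    simp only [show ∀ y : ℝ, -(α * y ^ 2 / 2) = -(α / 2) * y ^ 2 from fun y => by ring]
    convert ((hasDerivAt_pow 2 x).const_mul (-(α / 2))).exp using 1
    push_cast
    ring
  have hpow : HasDerivAt (fun x : ℝ => (1 + x ^ 2) ^ (k / 2))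
      (k / 2 * (1 + x ^ 2) ^ (k / 2 - 1) * (2 * x)) x := by
    convert ((hasDerivAt_pow 2 x).const_add 1).rpow_const
      (p := k / 2) (Or.inl (one_add_sq_pos x).ne') using 1
    push_cast
    ring
  have hsplit : (1 + x ^ 2) ^ (k / 2) = (1 + x ^ 2) * (1 + x ^ 2) ^ ((k - 2) / 2) := by
    rw [show k / 2 = 1 + (k - 2) / 2 by ring, rpow_add (one_add_sq_pos x), rpow_one]
  refine (hexp.mul hpow).congr_deriv ?_
  rw [gaussWeight, hsplit, show k / 2 - 1 = (k - 2) / 2 by ring]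
  ring

/-- The right-hand side is `-(4/α)` times the derivative of `gaussWeight α (k - 1)`. -/
theorem gaussWeight_le_neg_deriv (hα : 0 < α) {k x : ℝ} (hx : 1 ≤ x)
    (hxk : 2 * (k - 1) ≤ α * (1 + x ^ 2)) :
    gaussWeight α k x ≤
      -(4 / α * (x * (k - 1 - α * (1 + x ^ 2)) * gaussWeight α (k - 1 - 2) x)) := by
  set u := 1 + x ^ 2
  set v := gaussWeight α (k - 1 - 2) x
  have hv : 0 < v := gaussWeight_pos _ _ x
  have hsqrt : u ^ ((1 : ℝ) / 2) ≤ 2 * x := by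
    rw [← sqrt_eq_rpow]
    exact sqrt_le_iff.2 ⟨by linarith, by nlinarith⟩
  have hk : gaussWeight α k x = u * u ^ ((1 : ℝ) / 2) * v := by
    rw [show k = k - 1 - 2 + 3 by ring, gaussWeight_add, show (3 : ℝ) / 2 = 1 + 1 / 2 by norm_num,
      rpow_add (one_add_sq_pos x), rpow_one]
  rw [hk]
  calc u * u ^ ((1 : ℝ) / 2) * v ≤ u * (2 * x) * v := by gcongr
    _ ≤ -(4 / α * (x * (k - 1 - α * u) * v)) := by
      rw [show -(4 / α * (x * (k - 1 - α * u) * v)) = 4 * x * v * (α * u - (k - 1)) / α by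
        field_simp; ring, le_div_iff₀ hα]
      nlinarith [mul_le_mul_of_nonneg_left hxk (by positivity : (0 : ℝ) ≤ x * v)]

theorem integral_Ioi_gaussWeight_le (hα : 0 < α) {k y : ℝ} (hy : 1 ≤ y)
    (hyk : 2 * (k - 1) ≤ α * (1 + y ^ 2)) :
    ∫ x in Ioi y, gaussWeight α k x ≤ 4 / α * gaussWeight α (k - 1) y := by
  set g' := fun x => -(4 / α * (x * (k - 1 - α * (1 + x ^ 2)) * gaussWeight α (k - 1 - 2) x))
  have hderiv : ∀ x ∈ Ici y,
      HasDerivAt (fun x => -(4 / α * gaussWeight α (k - 1) x)) (g' x) x :=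
    fun x _ => ((hasDerivAt_gaussWeight α (k - 1) x).const_mul _).neg
  have hle : ∀ x ∈ Ioi y, gaussWeight α k x ≤ g' x := fun x hx =>
    gaussWeight_le_neg_deriv hα (hy.trans hx.le) (hyk.trans (by gcongr; nlinarith [mem_Ioi.1 hx]))
  have hg' : ∀ x ∈ Ioi y, 0 ≤ g' x := fun x hx => (gaussWeight_pos α k x).le.trans (hle x hx)
  have htend : Tendsto (fun x => -(4 / α * gaussWeight α (k - 1) x)) atTop (𝓝 0) := by
    simpa using (((tendsto_gaussWeight_cocompact hα (k - 1)).mono_left atTop_le_cocompact).const_mul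
      (4 / α)).neg
  calc ∫ x in Ioi y, gaussWeight α k x ≤ ∫ x in Ioi y, g' x :=
        setIntegral_mono_on (integrable_gaussWeight hα k).integrableOn
          (integrableOn_Ioi_deriv_of_nonneg' hderiv hg' htend) measurableSet_Ioi hle
    _ = 4 / α * gaussWeight α (k - 1) y := by
        rw [integral_Ioi_of_hasDerivAt_of_nonneg' hderiv hg' htend]
        ring

theorem isBigO_integral_Ioi_gaussWeight (hα : 0 < α) (k : ℝ) :
    (fun y => ∫ x in Ioi y, gaussWeight α k x) =O[𝓟 (Ici 0)] gaussWeight α (k - 1) := by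
  obtain ⟨y₀, hy₀⟩ : ∃ y₀, ∀ y ≥ y₀, 1 ≤ y ∧ 2 * (k - 1) ≤ α * (1 + y ^ 2) :=
    eventually_atTop.1 <| (eventually_ge_atTop 1).and <| ((tendsto_atTop_add_const_left _ 1
      (tendsto_pow_atTop two_ne_zero)).const_mul_atTop hα).eventually_ge_atTop _
  have htail_nonneg : ∀ y, 0 ≤ ∫ x in Ioi y, gaussWeight α k x := fun y =>
    setIntegral_nonneg measurableSet_Ioi fun x _ => (gaussWeight_pos α k x).le
  have hnear : (fun y => ∫ x in Ioi y, gaussWeight α k x) =O[𝓟 (Icc 0 y₀)]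
      gaussWeight α (k - 1) := by
    refine (isBigO_principal.2 ⟨∫ x, gaussWeight α k x, fun y _ => ?_⟩).trans
      ((continuous_gaussWeight α (k - 1)).continuousOn.isBigO_rev_principal isCompact_Icc
        (fun y _ => (gaussWeight_pos _ _ y).ne') (1 : ℝ))
    rw [norm_one, mul_one, norm_of_nonneg (htail_nonneg y)]
    exact setIntegral_le_integral (integrable_gaussWeight hα k)
      (Eventually.of_forall fun x => (gaussWeight_pos α k x).le)
  have hfar : (fun y => ∫ x in Ioi y, gaussWeight α k x) =O[𝓟 (Ici y₀)]
      gaussWeight α (k - 1) := by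
    refine isBigO_principal.2 ⟨4 / α, fun y hy => ?_⟩
    rw [norm_of_nonneg (htail_nonneg y), norm_of_nonneg (gaussWeight_pos _ _ y).le]
    exact integral_Ioi_gaussWeight_le hα (hy₀ y hy).1 (hy₀ y hy).2
  refine (hnear.sup hfar).mono ?_
  rw [sup_principal, principal_mono]
  intro y hy
  rcases le_total y y₀ with h | h
  · exact Or.inl ⟨hy, h⟩
  · exact Or.inr h

end gaussWeight

section GaussianDecay

variable {α k : ℝ} {g : ℝ → ℝ}

theorem integrable_of_isBigO_gaussWeight (hα : 0 < α) (hgm : AEStronglyMeasurable g)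
    (hg : g =O[⊤] gaussWeight α k) : Integrable g :=
  hg.integrable hgm (integrable_gaussWeight hα k)

theorem isBigO_mul_pow_gaussWeight (hg : g =O[⊤] gaussWeight α k) (j : ℕ) :
    (fun x => g x * x ^ j) =O[⊤] gaussWeight α (k + j) := by
  have hpow : (fun x : ℝ => x ^ j) =O[⊤] fun x => (1 + x ^ 2) ^ ((j : ℝ) / 2) := by
    refine isBigO_top.2 ⟨1, fun x => ?_⟩
    rw [one_mul, norm_pow, norm_of_nonneg (rpow_nonneg (one_add_sq_pos x).le _),
      div_eq_mul_one_div, mul_comm, rpow_mul (one_add_sq_pos x).le, rpow_natCast,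
      ← sqrt_eq_rpow]
    exact pow_le_pow_left₀ (norm_nonneg x) (abs_le_sqrt (by linarith : x ^ 2 ≤ 1 + x ^ 2)) j
  exact (hg.mul hpow).congr_right fun x => by rw [gaussWeight_add, mul_comm]

theorem hasDerivAt_integral_Iic (hc : Continuous g) (hgi : Integrable g) (y : ℝ) :
    HasDerivAt (fun t => ∫ x in Iic t, g x) (g y) y := by
  have hsplit : (fun t => ∫ x in Iic t, g x) =
      fun t => (∫ x in (0 : ℝ)..t, g x) + ∫ x in Iic 0, g x := by
    ext t
    rw [← intervalIntegral.integral_Iic_sub_Iic hgi.integrableOn hgi.integrableOn, sub_add_cancel]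
  rw [hsplit]
  exact (intervalIntegral.integral_hasDerivAt_right hgi.intervalIntegrable
    (hc.stronglyMeasurableAtFilter _ _) hc.continuousAt).add_const _

theorem continuous_integral_Iic (hc : Continuous g) (hgi : Integrable g) :
    Continuous fun t => ∫ x in Iic t, g x :=
  continuous_iff_continuousAt.2 fun y => (hasDerivAt_integral_Iic hc hgi y).continuousAt

theorem integral_Iic_eq_neg_integral_Ici (hgi : Integrable g) (hmean : ∫ x, g x = 0) (y : ℝ) :
    ∫ x in Iic y, g x = -∫ x in Ici y, g x := by
  have := intervalIntegral.integral_Iio_add_Ici (b := y) hgi.integrableOn hgi.integrableOn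
  rw [integral_Iic_eq_integral_Iio]
  linarith

theorem isBigO_integral_Iic_gaussWeight (hα : 0 < α) (hgm : AEStronglyMeasurable g)
    (hg : g =O[⊤] gaussWeight α k) (hmean : ∫ x, g x = 0) :
    (fun y => ∫ x in Iic y, g x) =O[⊤] gaussWeight α (k - 1) := by
  obtain ⟨C, hC⟩ := isBigO_top.1 hg
  have hset : ∀ s, ‖∫ x in s, g x‖ ≤ ‖∫ x in s, C * gaussWeight α k x‖ := fun s => by
    refine (norm_integral_le_of_norm_le ((integrable_gaussWeight hα k).const_mul C).integrableOn
      (Eventually.of_forall fun x => ?_)).trans (le_abs_self _)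
    simpa [norm_of_nonneg (gaussWeight_pos α k x).le] using hC x
  have hright : (fun y => ∫ x in Iic y, g x) =O[𝓟 (Ici 0)] gaussWeight α (k - 1) := by
    refine (IsBigO.of_bound' (Eventually.of_forall fun y => ?_)).trans
      ((isBigO_integral_Ioi_gaussWeight hα k).const_mul_left C)
    rw [integral_Iic_eq_neg_integral_Ici (integrable_of_isBigO_gaussWeight hα hgm hg) hmean,
      norm_neg, integral_Ici_eq_integral_Ioi, ← integral_const_mul]
    exact hset _
  have hleft : (fun y => ∫ x in Iic y, g x) =O[𝓟 (Iic 0)] gaussWeight α (k - 1) := by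
    have hneg : Tendsto (fun y : ℝ => -y) (𝓟 (Iic 0)) (𝓟 (Ici 0)) :=
      tendsto_principal_principal.2 fun y (hy : y ≤ 0) => show 0 ≤ -y from neg_nonneg.2 hy
    refine (IsBigO.of_bound' (Eventually.of_forall fun y => ?_)).trans
      ((((isBigO_integral_Ioi_gaussWeight hα k).comp_tendsto hneg).const_mul_left C).congr_right
        fun y => gaussWeight_neg _ _ y)
    rw [Function.comp_apply, ← integral_const_mul, ← integral_comp_neg_Iic]
    simpa only [gaussWeight_neg] using hset (Iic y)
  simpa [sup_principal, Iic_union_Ici] using hleft.sup hright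

theorem integral_integral_Iic_mul_pow (hα : 0 < α) (hc : Continuous g)
    (hg : g =O[⊤] gaussWeight α k) (hmean : ∫ x, g x = 0) (j : ℕ) :
    ∫ y, (∫ x in Iic y, g x) * y ^ j = -(∫ y, g y * y ^ (j + 1)) / (j + 1) := by
  have hgi : Integrable g := integrable_of_isBigO_gaussWeight hα hc.aestronglyMeasurable hg
  have hGc : Continuous fun y => ∫ x in Iic y, g x := continuous_integral_Iic hc hgi
  have hG := isBigO_integral_Iic_gaussWeight hα hc.aestronglyMeasurable hg hmean
  have hderiv : ∀ y, HasDerivAt (fun y => (∫ x in Iic y, g x) * y ^ (j + 1) / (j + 1))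
      (g y * y ^ (j + 1) / (j + 1) + (∫ x in Iic y, g x) * y ^ j) y := fun y => by
    refine (((hasDerivAt_integral_Iic hc hgi y).mul (hasDerivAt_pow (j + 1) y)).div_const _
      ).congr_deriv ?_
    push_cast
    field_simp
  have hgj := (integrable_of_isBigO_gaussWeight hα (by fun_prop)
    (isBigO_mul_pow_gaussWeight hg (j + 1))).div_const ((j : ℝ) + 1)
  have hGj := integrable_of_isBigO_gaussWeight hα (by fun_prop) (isBigO_mul_pow_gaussWeight hG j)
  have hGj' := (integrable_of_isBigO_gaussWeight hα (by fun_prop)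
    (isBigO_mul_pow_gaussWeight hG (j + 1))).div_const ((j : ℝ) + 1)
  have hzero := integral_eq_zero_of_hasDerivAt_of_integrable hderiv (hgj.add hGj) hGj'
  rw [integral_add hgj hGj, integral_div] at hzero
  linear_combination hzero

theorem iterate_integral_Iic_decay (hα : 0 < α) {F : ℕ → ℝ → ℝ}
    (hF : ∀ m y, F (m + 1) y = ∫ x in Iic y, F m x) {n : ℕ} (hc : Continuous (F 0))
    (hO : F 0 =O[⊤] gaussWeight α k) (hmom : ∀ j ≤ n, ∫ y, F 0 y * y ^ j = 0) :
    ∀ m ≤ n + 1, Continuous (F m) ∧ F m =O[⊤] gaussWeight α (k - m) ∧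
      ∀ j, j + m ≤ n → ∫ y, F m y * y ^ j = 0 := by
  intro m
  induction m with
  | zero => exact fun _ => ⟨hc, by simpa using hO, fun j hj => hmom j (by omega)⟩
  | succ m ih =>
    intro hm
    obtain ⟨hcm, hOm, hmomm⟩ := ih (by omega)
    have hmean : ∫ y, F m y = 0 := by simpa using hmomm 0 (by omega)
    rw [funext (hF m), show k - ((m + 1 : ℕ) : ℝ) = k - m - 1 by push_cast; ring]
    refine ⟨continuous_integral_Iic hcm
        (integrable_of_isBigO_gaussWeight hα hcm.aestronglyMeasurable hOm),
      isBigO_integral_Iic_gaussWeight hα hcm.aestronglyMeasurable hOm hmean, fun j hj => ?_⟩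
    rw [integral_integral_Iic_mul_pow hα hcm hOm hmean, hmomm (j + 1) (by omega), neg_zero,
      zero_div]

end GaussianDecay

theorem stmt17_general (α : ℝ) (hα : 0 < α) (f : ℝ → ℝ) (hf : Continuous f)
    (C : ℝ)
    (hbound : ∀ y, |f y| ≤ C * Real.exp (-(α * y ^ 2 / 2)) * (1 + y ^ 2) ^ ((3 : ℝ) / 2))
    (hmom : ∀ m : ℕ, m ≤ 2 → ∫ y : ℝ, f y * y ^ m = 0)
    (F : ℕ → ℝ → ℝ) (hF0 : F 0 = f)
    (hFrec : ∀ m y, F (m + 1) y = ∫ x in Set.Iic y, F m x) :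
    ∀ m : ℕ, 1 ≤ m → m ≤ 3 →
      (∀ y, F m y = -∫ x in Set.Ici y, F (m - 1) x) ∧
      ∃ C' > 0, ∀ y, |F m y|
        ≤ C' * Real.exp (-(α * y ^ 2 / 2)) * (1 + y ^ 2) ^ (((3 : ℝ) - m) / 2) := by
  subst hF0
  have hO : F 0 =O[⊤] gaussWeight α 3 := isBigO_top.2 ⟨C, fun y => by
    rw [Real.norm_eq_abs, norm_of_nonneg (gaussWeight_pos α 3 y).le, gaussWeight, ← mul_assoc]
    exact hbound y⟩
  have hdecay := iterate_integral_Iic_decay hα hFrec hf hO hmom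
  intro m hm1 hm3
  obtain ⟨i, rfl⟩ : ∃ i, m = i + 1 := ⟨m - 1, by omega⟩
  obtain ⟨hci, hOi, hmomi⟩ := hdecay i (by omega)
  refine ⟨fun y => ?_, ?_⟩
  · rw [hFrec, Nat.add_sub_cancel]
    exact integral_Iic_eq_neg_integral_Ici
      (integrable_of_isBigO_gaussWeight hα hci.aestronglyMeasurable hOi)
      (by simpa using hmomi 0 (by omega)) y
  · obtain ⟨c, hc, hcw⟩ := (hdecay (i + 1) hm3).2.1.exists_pos
    refine ⟨c, hc, fun y => ?_⟩
    have hy := isBigOWith_top.1 hcw y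
    rwa [Real.norm_eq_abs, norm_of_nonneg (gaussWeight_pos α _ y).le, gaussWeight,
      ← mul_assoc] at hy

/-- If `f` has Gaussian decay `|f(y)| ≤ C e^{-αy²/2}⟨y⟩³` and vanishing moments
`∫ f y^m = 0` for `m = 0,1,2`, then its iterated antiderivatives
`f^{(-m)}`, `m = 1,2,3`, have the two-sided representation
`f^{(-m)}(y) = -∫_y^∞ f^{(-m+1)}` and satisfy
`|f^{(-m)}(y)| ≤ C' e^{-αy²/2}⟨y⟩^{3-m}`. -/
theorem stmt17 (α : ℝ) (hα : 0 < α) (f : ℝ → ℝ) (hf : Continuous f)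
    (C : ℝ) (hC : 0 ≤ C)
    (hbound : ∀ y, |f y| ≤ C * Real.exp (-(α * y ^ 2 / 2)) * (1 + y ^ 2) ^ ((3 : ℝ) / 2))
    (hmom : ∀ m : ℕ, m ≤ 2 → ∫ y : ℝ, f y * y ^ m = 0)
    (F : ℕ → ℝ → ℝ) (hF0 : F 0 = f)
    (hFrec : ∀ m y, F (m + 1) y = ∫ x in Set.Iic y, F m x) :
    ∀ m : ℕ, 1 ≤ m → m ≤ 3 →
      (∀ y, F m y = -∫ x in Set.Ici y, F (m - 1) x) ∧
      ∃ C' > 0, ∀ y, |F m y|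
        ≤ C' * Real.exp (-(α * y ^ 2 / 2)) * (1 + y ^ 2) ^ (((3 : ℝ) - m) / 2) :=
  stmt17_general α hα f hf C hbound hmom F hF0 hFrec
end

section
/- Let a(τ) be continuous on [0,T] with |a(τ) - α| ≤ 2β(τ) and a(τ) ≥ 1/4, where β(τ) ≤ β(0) ≪ 1 is decreasing, and let μ(τ) = λ(t(τ))/λ₁(t(τ)) satisfy μ(T) = 1 and the integral equation μ(τ) - 1 = -∫_τ^T e^{-∫_τ^σ 2a(ρ)dρ} Γ(σ)dσ with |Γ| ≤ C(β + (1 + μ^{-1})(μ-1)² + β|μ-1|). Then |μ(τ) - 1| ≤ C' β(τ) for all τ ∈ [0,T], provided β(0) is small enough. -/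
/-!
Bootstrap argument. As long as `|μ - 1| ≤ 4Cβ` holds on `[τ, T]`, smallness of `β` absorbs the
quadratic term of the remainder, so `|Γ| ≤ (3/2)Cβ(τ)` there (`β` is decreasing). Since
`2a ≥ 1/2`, the kernel `e^{-∫ 2a}` has integral at most `2`, and the Volterra equation returns the
strictly better bound `|μ(τ) - 1| ≤ 3Cβ(τ)`. Continuity of `μ` then propagates the bound from
`μ(T) = 1` down to `τ = 0`.
-/

open Set MeasureTheory Real

lemma integral_exp_neg_mul_sub_le {c : ℝ} (hc : 0 < c) (τ T : ℝ) :
    ∫ σ in τ..T, exp (-(c * (σ - τ))) ≤ c⁻¹ := by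
  have h := intervalIntegral.integral_comp_mul_sub (fun x => exp (-x)) hc.ne' (c * τ)
    (a := τ) (b := T)
  simp only [mul_sub] at h ⊢
  rw [h, intervalIntegral.integral_comp_neg, integral_exp, smul_eq_mul, sub_self, neg_zero,
    exp_zero]
  have := exp_pos (-(c * T - c * τ))
  have := inv_pos.2 hc
  nlinarith

lemma exp_neg_integral_le {a : ℝ → ℝ} {c τ σ : ℝ} (hτσ : τ ≤ σ)
    (ha : IntegrableOn a (Icc τ σ)) (hca : ∀ ρ ∈ Icc τ σ, c ≤ a ρ) :
    exp (-∫ ρ in τ..σ, a ρ) ≤ exp (-(c * (σ - τ))) := by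
  gcongr
  have := intervalIntegral.integral_mono_on hτσ intervalIntegrable_const
    ((intervalIntegrable_iff_integrableOn_Icc_of_le hτσ).2 ha) hca
  simpa [mul_comm] using this

lemma abs_integral_exp_neg_integral_mul_le {a Γ : ℝ → ℝ} {c M τ T : ℝ} (hτT : τ ≤ T)
    (hc : 0 < c) (ha : IntegrableOn a (Icc τ T)) (hca : ∀ ρ ∈ Icc τ T, c ≤ a ρ)
    (hΓ : ∀ σ ∈ Icc τ T, |Γ σ| ≤ M) :
    |∫ σ in τ..T, exp (-∫ ρ in τ..σ, a ρ) * Γ σ| ≤ M / c := by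
  have hM : 0 ≤ M := (abs_nonneg _).trans (hΓ τ ⟨le_rfl, hτT⟩)
  have hpointwise : ∀ σ ∈ Icc τ T,
      ‖exp (-∫ ρ in τ..σ, a ρ) * Γ σ‖ ≤ M * exp (-(c * (σ - τ))) := by
    intro σ hσ
    have hsub : Icc τ σ ⊆ Icc τ T := Icc_subset_Icc_right hσ.2
    rw [norm_mul, norm_of_nonneg (exp_pos _).le, mul_comm M]
    exact mul_le_mul (exp_neg_integral_le hσ.1 (ha.mono_set hsub) fun ρ hρ => hca ρ (hsub hρ))
      (hΓ σ hσ) (abs_nonneg _) (exp_pos _).le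
  calc |∫ σ in τ..T, exp (-∫ ρ in τ..σ, a ρ) * Γ σ|
      ≤ ∫ σ in τ..T, M * exp (-(c * (σ - τ))) :=
        intervalIntegral.norm_integral_le_of_norm_le hτT
          (ae_of_all _ fun σ hσ => hpointwise σ (Ioc_subset_Icc_self hσ))
          ((by fun_prop : Continuous fun σ => M * exp (-(c * (σ - τ)))).intervalIntegrable _ _)
    _ = M * ∫ σ in τ..T, exp (-(c * (σ - τ))) := intervalIntegral.integral_const_mul _ _
    _ ≤ M * c⁻¹ := mul_le_mul_of_nonneg_left (integral_exp_neg_mul_sub_le hc τ T) hM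
    _ = M / c := div_eq_mul_inv _ _ |>.symm

lemma remainder_le_of_abs_sub_one_le {C b μ : ℝ} (hb : 0 ≤ b)
    (hsmall : (96 * C ^ 2 + 8 * C) * b ≤ 1) (hμ : 0 < μ) (hμb : |μ - 1| ≤ 4 * C * b) :
    b + (1 + μ⁻¹) * (μ - 1) ^ 2 + b * |μ - 1| ≤ 3 / 2 * b := by
  have hhalf : |μ - 1| ≤ 1 / 2 := hμb.trans (by nlinarith)
  have hinv : 1 + μ⁻¹ ≤ 3 := by
    have : (1 : ℝ) / 2 ≤ μ := by linarith [(abs_le.1 hhalf).1]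
    have : μ⁻¹ ≤ 2 := by rw [inv_le_comm₀ hμ two_pos]; linarith
    linarith
  have hsq : (μ - 1) ^ 2 ≤ (4 * C * b) ^ 2 := by
    rw [← sq_abs]; exact pow_le_pow_left₀ (abs_nonneg _) hμb 2
  calc b + (1 + μ⁻¹) * (μ - 1) ^ 2 + b * |μ - 1|
      ≤ b + 3 * (4 * C * b) ^ 2 + b * (4 * C * b) := by gcongr
    _ = b + (96 * C ^ 2 + 8 * C) * b * (b / 2) := by ring
    _ ≤ 3 / 2 * b := by nlinarith

lemma le_on_Icc_of_backward_bootstrap {u b : ℝ → ℝ} {t₀ T : ℝ}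
    (hu : ContinuousOn u (Icc t₀ T)) (hb : AntitoneOn b (Icc t₀ T)) (hbase : u T ≤ b T)
    (himprove : ∀ τ ∈ Icc t₀ T, (∀ σ ∈ Icc τ T, u σ ≤ b σ) → u τ < b τ) :
    ∀ τ ∈ Icc t₀ T, u τ ≤ b τ := by
  intro τ hτ
  set A := {τ ∈ Icc t₀ T | ∀ σ ∈ Icc τ T, u σ ≤ b σ}
  have hTA : T ∈ A := ⟨right_mem_Icc.2 (hτ.1.trans hτ.2), fun σ hσ => by
    rwa [le_antisymm hσ.2 hσ.1]⟩
  have hA : BddBelow A := ⟨t₀, fun x hx => hx.1.1⟩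
  set m := sInf A
  have hm : m ∈ Icc t₀ T := ⟨le_csInf ⟨T, hTA⟩ fun x hx => hx.1.1, csInf_le hA hTA⟩
  have hright : ∀ σ ∈ Ioc m T, u σ ≤ b σ := fun σ hσ => by
    obtain ⟨x, hxA, hxσ⟩ := exists_lt_of_csInf_lt ⟨T, hTA⟩ hσ.1
    exact hxA.2 σ ⟨hxσ.le, hσ.2⟩
  have hIoc : Ioc m T ⊆ Icc t₀ T := fun x hx => ⟨hm.1.trans hx.1.le, hx.2⟩
  -- `b` need not be continuous, but `b σ ≤ b m` for `σ > m` suffices to pass to the limit.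
  have hmm : u m ≤ b m := by
    rcases hm.2.eq_or_lt with hmT | hmT
    · rwa [hmT]
    · have := left_nhdsWithin_Ioc_neBot hmT
      refine le_of_tendsto ((hu m hm).mono hIoc) ?_
      filter_upwards [self_mem_nhdsWithin] with σ hσ
      exact (hright σ hσ).trans (hb hm (hIoc hσ) hσ.1.le)
  have hmA : ∀ σ ∈ Icc m T, u σ ≤ b σ := fun σ hσ => by
    rcases hσ.1.eq_or_lt with rfl | hmσ
    · exact hmm
    · exact hright σ ⟨hmσ, hσ.2⟩
  have hm₀ : m = t₀ := by
    by_contra hne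
    have hlt : t₀ < m := lt_of_le_of_ne hm.1 (Ne.symm hne)
    obtain ⟨δ, hδ, hclose⟩ := Metric.continuousWithinAt_iff.1 (hu m hm) _
      (sub_pos.2 (himprove m hm hmA))
    set τ' := max t₀ (m - δ / 2)
    have hτ'A : τ' ∈ A := by
      refine ⟨⟨le_max_left _ _, ?_⟩, fun σ hσ => ?_⟩
      · exact (max_le hm.1 (by linarith)).trans hm.2
      rcases le_or_gt m σ with hmσ | hσm
      · exact hmA σ ⟨hmσ, hσ.2⟩
      have hσ' : σ ∈ Icc t₀ T := ⟨(le_max_left _ _).trans hσ.1, hσ.2⟩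
      have hdist : dist σ m < δ := by
        rw [Real.dist_eq, abs_of_neg (by linarith)]
        linarith [le_max_right t₀ (m - δ / 2), hσ.1]
      have := hclose hσ' hdist
      rw [Real.dist_eq] at this
      linarith [(abs_lt.1 this).2, hb hσ' hm hσm.le]
    linarith [csInf_le hA hτ'A, max_lt hlt (show m - δ / 2 < m by linarith)]
  exact hmA τ ⟨hm₀ ▸ hτ.1, hτ.2⟩

lemma abs_sub_one_le_of_volterra {K T : ℝ} {a β μ Γ : ℝ → ℝ} (hK : 0 < K) (hT : 0 ≤ T)
    (ha : ContinuousOn a (Icc 0 T)) (hμ : ContinuousOn μ (Icc 0 T))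
    (hβ : AntitoneOn β (Icc 0 T)) (hβpos : ∀ τ ∈ Icc 0 T, 0 < β τ)
    (hβ0 : (96 * K ^ 2 + 8 * K) * β 0 ≤ 1) (ha4 : ∀ τ ∈ Icc 0 T, 1 / 4 ≤ a τ)
    (hμpos : ∀ τ ∈ Icc 0 T, 0 < μ τ) (hμT : μ T = 1)
    (hμeq : ∀ τ ∈ Icc 0 T, μ τ - 1 = -∫ σ in τ..T, exp (-∫ ρ in τ..σ, 2 * a ρ) * Γ σ)
    (hΓ : ∀ σ ∈ Icc 0 T,
      |Γ σ| ≤ K * (β σ + (1 + (μ σ)⁻¹) * (μ σ - 1) ^ 2 + β σ * |μ σ - 1|)) :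
    ∀ τ ∈ Icc 0 T, |μ τ - 1| ≤ 4 * K * β τ := by
  refine le_on_Icc_of_backward_bootstrap (u := fun τ => |μ τ - 1|) (b := fun τ => 4 * K * β τ)
    (hμ.sub continuousOn_const).abs
    (fun x hx y hy hxy => mul_le_mul_of_nonneg_left (hβ hx hy hxy) (by positivity)) ?_
    fun τ hτ hboot => ?_
  · simpa [hμT] using mul_nonneg (by positivity : (0 : ℝ) ≤ 4 * K) (hβpos T ⟨hT, le_rfl⟩).le
  have hsub : Icc τ T ⊆ Icc 0 T := Icc_subset_Icc_left hτ.1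
  have hΓτ : ∀ σ ∈ Icc τ T, |Γ σ| ≤ K * (3 / 2 * β τ) := fun σ hσ => by
    have hσ' := hsub hσ
    have hsmall : (96 * K ^ 2 + 8 * K) * β σ ≤ 1 :=
      le_trans (by gcongr; exact hβ ⟨le_rfl, hT⟩ hσ' hσ'.1) hβ0
    calc |Γ σ| ≤ _ := hΓ σ hσ'
      _ ≤ K * (3 / 2 * β σ) := by
        gcongr
        exact remainder_le_of_abs_sub_one_le (hβpos σ hσ').le hsmall (hμpos σ hσ') (hboot σ hσ)
      _ ≤ K * (3 / 2 * β τ) := by gcongr; exact hβ hτ hσ' hσ.1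
  have hvolterra := abs_integral_exp_neg_integral_mul_le hτ.2 (by norm_num : (0 : ℝ) < 1 / 2)
    ((ha.mono hsub).integrableOn_Icc.const_mul 2) (fun ρ hρ => by linarith [ha4 ρ (hsub hρ)]) hΓτ
  calc |μ τ - 1| ≤ K * (3 / 2 * β τ) / (1 / 2) := by rwa [hμeq τ hτ, abs_neg]
    _ = 3 * K * β τ := by ring
    _ < 4 * K * β τ := by linarith [mul_pos hK (hβpos τ hτ)]

theorem stmt18_general (C : ℝ) :
    ∃ ε₀ > 0, ∃ C' > 0, ∀ T α : ℝ, 0 ≤ T → α ∈ Set.Icc (1 / 4 : ℝ) 1 →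
      ∀ a β μ Γ : ℝ → ℝ,
      ContinuousOn a (Set.Icc 0 T) → ContinuousOn μ (Set.Icc 0 T) →
      ContinuousOn Γ (Set.Icc 0 T) →
      AntitoneOn β (Set.Icc 0 T) →
      (∀ τ ∈ Set.Icc (0 : ℝ) T, 0 < β τ) →
      β 0 ≤ ε₀ →
      (∀ τ ∈ Set.Icc (0 : ℝ) T, |a τ - α| ≤ 2 * β τ ∧ 1 / 4 ≤ a τ) →
      (∀ τ ∈ Set.Icc (0 : ℝ) T, 0 < μ τ) →
      μ T = 1 →
      (∀ τ ∈ Set.Icc (0 : ℝ) T,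
        μ τ - 1 = -∫ σ in τ..T, Real.exp (-∫ ρ in τ..σ, 2 * a ρ) * Γ σ) →
      (∀ σ ∈ Set.Icc (0 : ℝ) T,
        |Γ σ| ≤ C * (β σ + (1 + (μ σ)⁻¹) * (μ σ - 1) ^ 2 + β σ * |μ σ - 1|)) →
      ∀ τ ∈ Set.Icc (0 : ℝ) T, |μ τ - 1| ≤ C' * β τ := by
  set K := max C 1
  have hK : 0 < K := zero_lt_one.trans_le (le_max_right _ _)
  refine ⟨(96 * K ^ 2 + 8 * K)⁻¹, by positivity, 4 * K, by positivity, ?_⟩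
  intro T α hT _ a β μ Γ ha hμ _ hβ hβpos hβ0 ha4 hμpos hμT hμeq hΓ
  refine abs_sub_one_le_of_volterra hK hT ha hμ hβ hβpos ?_ (fun τ hτ => (ha4 τ hτ).2) hμpos hμT
    hμeq fun σ hσ => (hΓ σ hσ).trans (mul_le_mul_of_nonneg_right (le_max_left _ _) ?_)
  · exact (le_inv_mul_iff₀ (by positivity)).1 (by rwa [mul_one])
  · have := hβpos σ hσ
    have := hμpos σ hσ
    positivity

/-- Volterra-type estimate for the ratio `μ = λ/λ₁` of scaling parameters:
if `μ(T) = 1`, `μ(τ) - 1 = -∫_τ^T e^{-∫_τ^σ 2a} Γ(σ) dσ` with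
`|Γ| ≤ C(β + (1+μ⁻¹)(μ-1)² + β|μ-1|)`, `|a - α| ≤ 2β`, `a ≥ 1/4`, `β`
decreasing and `β(0)` small enough, then `|μ(τ) - 1| ≤ C'β(τ)` on `[0,T]`. -/
theorem stmt18 (C : ℝ) (hC : 0 < C) :
    ∃ ε₀ > 0, ∃ C' > 0, ∀ T α : ℝ, 0 ≤ T → α ∈ Set.Icc (1 / 4 : ℝ) 1 →
      ∀ a β μ Γ : ℝ → ℝ,
      ContinuousOn a (Set.Icc 0 T) → ContinuousOn μ (Set.Icc 0 T) →
      ContinuousOn Γ (Set.Icc 0 T) →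
      AntitoneOn β (Set.Icc 0 T) →
      (∀ τ ∈ Set.Icc (0 : ℝ) T, 0 < β τ) →
      β 0 ≤ ε₀ →
      (∀ τ ∈ Set.Icc (0 : ℝ) T, |a τ - α| ≤ 2 * β τ ∧ 1 / 4 ≤ a τ) →
      (∀ τ ∈ Set.Icc (0 : ℝ) T, 0 < μ τ) →
      μ T = 1 →
      (∀ τ ∈ Set.Icc (0 : ℝ) T,
        μ τ - 1 = -∫ σ in τ..T, Real.exp (-∫ ρ in τ..σ, 2 * a ρ) * Γ σ) →
      (∀ σ ∈ Set.Icc (0 : ℝ) T,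
        |Γ σ| ≤ C * (β σ + (1 + (μ σ)⁻¹) * (μ σ - 1) ^ 2 + β σ * |μ σ - 1|)) →
      ∀ τ ∈ Set.Icc (0 : ℝ) T, |μ τ - 1| ≤ C' * β τ :=
  stmt18_general C
end

section
/- Suppose nonneg. quantities M₁, M₂ satisfy on [0,T]: M₂ ≤ C(M₂(0) + ε^{1/2}M₁(0) + ε^{1/3}M₁^{2/3}M₂^{1/3} + M₂² + M₂^p + ε^{κ/2}(1 + M₂ + M₁A + M₁² + M₁^p)) and M₁ ≤ C(M₁(0) + ε^{κ/2}(1 + M₁A + M₁² + M₁^p) + M₂M₁ + M₁M₂^{p-1}), with A ≤ C'(1 + εM₁(1+A) + εM₁² + ε^{2p-2}M₁^p) solvable for A, and M₁, M₂, A continuous nondecreasing with M₁(0), A(0) ≲ 1, M₂(0) ≪ 1. Then if M₁, M₂, A ≤ ε^{-κ/2} on [0,T] and ε is small enough, in fact M₁ ≲ M₁(0) + ε^{κ/2}, M₂ ≲ M₂(0) + ε^{κ/2}, and A, M₁ ≲ 1, M₂ ≪ 1 on [0,T]. -/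
/-!
The a priori bounds `M₁, A ≤ ε^{-κ/2}` already force `A ≤ 2C'`, because every nonconstant term of
the `A`-inequality then carries a surplus factor `ε^κ`. With `A` bounded, the `M₁`- and
`M₂`-inequalities have small coefficients in front of `M₁` and `M₂` as long as `M₁ ≤ K := 2C + 2`
and `M₂ ≤ η` for a small `η`; absorbing those terms gives `M₁ ≤ 2C(M₁(0) + Bε^{κ/2}) < K` and
`M₂ ≤ 2C(M₂(0) + Dε^{κ/2}) < η` with `B, D` depending only on `p, C, C'`. So the closed
condition `M₁ ≤ K ∧ M₂ ≤ η` implies its strict, open version; it holds at `t = 0`, hence on all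
of the connected interval `[0, T]`.
-/

open Real Set Filter Topology

theorem IsPreconnected.forall_le_of_le_imp_lt₂ {α β γ : Type*} [TopologicalSpace α]
    [TopologicalSpace β] [LinearOrder β] [OrderClosedTopology β]
    [TopologicalSpace γ] [LinearOrder γ] [OrderClosedTopology γ]
    {s : Set α} (hs : IsPreconnected s) {f : α → β} {g : α → γ}
    (hf : ContinuousOn f s) (hg : ContinuousOn g s) {a : β} {b : γ} {x₀ : α} (hx₀ : x₀ ∈ s)
    (h₀ : f x₀ ≤ a ∧ g x₀ ≤ b) (himp : ∀ x ∈ s, f x ≤ a → g x ≤ b → f x < a ∧ g x < b) :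
    ∀ x ∈ s, f x ≤ a ∧ g x ≤ b := by
  have := isPreconnected_iff_preconnectedSpace.mp hs
  rw [continuousOn_iff_continuous_domRestrict] at hf hg
  let V : Set s := {x : s | f x ≤ a ∧ g x ≤ b}
  have hV : V = {x : s | f x < a ∧ g x < b} :=
    ext fun x : s => ⟨fun h => himp x x.2 h.1 h.2, fun h => ⟨h.1.le, h.2.le⟩⟩
  have hclopen : IsClopen V :=
    ⟨(isClosed_le hf continuous_const).inter (isClosed_le hg continuous_const),
      hV ▸ (isOpen_lt hf continuous_const).inter (isOpen_lt hg continuous_const)⟩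
  intro x hx
  exact (hclopen.eq_univ ⟨⟨x₀, hx₀⟩, h₀⟩).ge (mem_univ (⟨x, hx⟩ : s))

lemma eventually_mul_rpow_lt {a r : ℝ} (ha : 0 < a) (c : ℝ) (hr : 0 < r) :
    ∀ᶠ x in 𝓝[>] (0 : ℝ), c * x ^ a < r := by
  have h := ((continuousAt_rpow_const 0 a (Or.inr ha.le)).tendsto.const_mul c).mono_left
    (nhdsWithin_le_nhds (s := Ioi 0))
  rw [zero_rpow ha.ne', mul_zero] at h
  exact h.eventually_lt_const hr

lemma eventually_mul_lt (c : ℝ) {r : ℝ} (hr : 0 < r) : ∀ᶠ x in 𝓝[>] (0 : ℝ), c * x < r := by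
  simpa using eventually_mul_rpow_lt one_pos c hr

lemma le_two_mul_of_le_add_mul {x a b : ℝ} (hx : 0 ≤ x) (hb : b ≤ 1 / 2) (h : x ≤ a + b * x) :
    x ≤ 2 * a := by
  nlinarith

lemma le_mul_add_of_le_two_mul {x x₀ e C B D c : ℝ} (hx₀ : 0 ≤ x₀) (he : 0 ≤ e) (hC : 0 ≤ C)
    (hBD : B ≤ D) (hD : 1 ≤ D) (hc : 2 * C * D ≤ c) (h : x ≤ 2 * (C * (x₀ + B * e))) :
    x ≤ c * (x₀ + e) := by
  have : x₀ + B * e ≤ D * (x₀ + e) := by nlinarith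
  calc x ≤ 2 * C * D * (x₀ + e) := by nlinarith [mul_le_mul_of_nonneg_left this hC]
    _ ≤ c * (x₀ + e) := by gcongr

lemma rpow_le_one_add {y r : ℝ} (hy : 0 ≤ y) (hr₀ : 0 ≤ r) (hr₁ : r ≤ 1) : y ^ r ≤ 1 + y := by
  rcases le_total y 1 with h | h
  · linarith [rpow_le_one hy h hr₀]
  · have := rpow_le_rpow_of_exponent_le h hr₁
    rw [rpow_one] at this
    linarith

section Majorants

variable {p κ ε : ℝ}

lemma mul_rpow_neg_half_sq_le (hε : 0 < ε) (hε₁ : ε ≤ 1) (hκ : κ ≤ 1 / 2) :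
    ε * (ε ^ (-(κ / 2))) ^ 2 ≤ ε ^ κ := by
  rw [← rpow_natCast, ← rpow_mul hε.le, ← rpow_one_add' hε.le (by push_cast; linarith)]
  exact rpow_le_rpow_of_exponent_ge hε hε₁ (by push_cast; linarith)

lemma rpow_mul_rpow_neg_half_le (hp : 1 < p) (hκ₁ : κ ≤ 1 / 2)
    (hκp : κ ≤ (p - 1) / 2) (hε : 0 < ε) (hε₁ : ε ≤ 1) :
    ε ^ (2 * p - 2) * (ε ^ (-(κ / 2))) ^ p ≤ ε ^ κ := by
  rw [← rpow_mul hε.le, ← rpow_add hε]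
  refine rpow_le_rpow_of_exponent_ge hε hε₁ ?_
  rcases le_total p 2 with h | h <;> nlinarith

lemma A_le_two_mul_of_apriori {C' m a : ℝ} (hp : 1 < p) (hκ₀ : 0 ≤ κ) (hκ₁ : κ ≤ 1 / 2)
    (hκp : κ ≤ (p - 1) / 2) (hε : 0 < ε) (hε₁ : ε ≤ 1) (he : ε ^ (κ / 2) ≤ 1 / 2)
    (hC' : 0 ≤ C') (hm : 0 ≤ m) (ha : 0 ≤ a) (hmu : m ≤ ε ^ (-(κ / 2)))
    (hau : a ≤ ε ^ (-(κ / 2)))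
    (h : a ≤ C' * (1 + ε * m * (1 + a) + ε * m ^ 2 + ε ^ (2 * p - 2) * m ^ p)) :
    a ≤ 2 * C' := by
  set u := ε ^ (-(κ / 2))
  have hu : 1 ≤ u := one_le_rpow_of_pos_of_le_one_of_nonpos hε hε₁ (by linarith)
  have hεκ : ε ^ κ ≤ 1 / 4 := by
    rw [show κ = κ / 2 * (2 : ℕ) by push_cast; ring, rpow_mul_natCast hε.le]
    nlinarith [rpow_nonneg hε.le (κ / 2)]
  have hu₂ : ε * u ^ 2 ≤ ε ^ κ := mul_rpow_neg_half_sq_le hε hε₁ hκ₁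
  have hup : ε ^ (2 * p - 2) * u ^ p ≤ ε ^ κ := rpow_mul_rpow_neg_half_le hp hκ₁ hκp hε hε₁
  have h₁ : ε * m * (1 + a) ≤ 2 * (ε * u ^ 2) := by
    calc ε * m * (1 + a) ≤ ε * u * (u + u) := by gcongr
      _ = 2 * (ε * u ^ 2) := by ring
  have h₂ : ε * m ^ 2 ≤ ε * u ^ 2 := by gcongr
  have h₃ : ε ^ (2 * p - 2) * m ^ p ≤ ε ^ (2 * p - 2) * u ^ p := by gcongr
  calc a ≤ C' * 2 := h.trans (by gcongr; linarith)
    _ = 2 * C' := mul_comm _ _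

lemma M₁_le_two_mul_of_small {C B m m₀ n a e : ℝ} (hC : 0 ≤ C) (hm : 0 ≤ m) (he : 0 ≤ e)
    (hB : 1 + m * a + m ^ 2 + m ^ p ≤ B) (hCn : C * n ≤ 1 / 4) (hCn' : C * n ^ (p - 1) ≤ 1 / 4)
    (h : m ≤ C * (m₀ + e * (1 + m * a + m ^ 2 + m ^ p) + n * m + m * n ^ (p - 1))) :
    m ≤ 2 * (C * (m₀ + B * e)) := by
  have := mul_le_mul_of_nonneg_left hB (mul_nonneg hC he)
  refine le_two_mul_of_le_add_mul hm (b := C * n + C * n ^ (p - 1)) (by linarith) ?_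
  linarith

lemma M₂_le_two_mul_of_small {C K B D m m₀ n n₀ a : ℝ} (hp : 1 < p) (hκ₁ : κ ≤ 1 / 2)
    (hε : 0 < ε) (hε₁ : ε ≤ 1) (hC : 0 ≤ C) (hm : 0 ≤ m) (hmK : m ≤ K) (hm₀ : m₀ ≤ 1)
    (hn : 0 ≤ n) (hB : 1 + m * a + m ^ 2 + m ^ p ≤ B) (hD : 1 + K ^ ((2 : ℝ) / 3) + B ≤ D)
    (hCn : C * n ≤ 1 / 8) (hCn' : C * n ^ (p - 1) ≤ 1 / 8)
    (hCe : C * (K ^ ((2 : ℝ) / 3) + 1) * ε ^ (κ / 2) ≤ 1 / 4)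
    (h : n ≤ C * (n₀ + ε ^ ((1 : ℝ) / 2) * m₀
      + ε ^ ((1 : ℝ) / 3) * m ^ ((2 : ℝ) / 3) * n ^ ((1 : ℝ) / 3) + n ^ 2 + n ^ p
      + ε ^ (κ / 2) * (1 + n + m * a + m ^ 2 + m ^ p))) :
    n ≤ 2 * (C * (n₀ + D * ε ^ (κ / 2))) := by
  set e := ε ^ (κ / 2)
  have he : 0 ≤ e := rpow_nonneg hε.le _
  have h₁ : ε ^ ((1 : ℝ) / 2) * m₀ ≤ e :=
    (mul_le_of_le_one_right (rpow_nonneg hε.le _) hm₀).trans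
      (rpow_le_rpow_of_exponent_ge hε hε₁ (by linarith))
  have h₂ : ε ^ ((1 : ℝ) / 3) * m ^ ((2 : ℝ) / 3) * n ^ ((1 : ℝ) / 3)
      ≤ e * K ^ ((2 : ℝ) / 3) * (1 + n) := by
    have hK : 0 ≤ K := hm.trans hmK
    gcongr
    · exact rpow_le_rpow_of_exponent_ge hε hε₁ (by linarith)
    · exact rpow_le_one_add hn (by norm_num) (by norm_num)
  have h₃ : n ^ p = n ^ (p - 1) * n := by
    conv_lhs => rw [show p = (p - 1) + 1 by ring]
    rw [rpow_add' hn (by linarith), rpow_one]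
  have := mul_le_mul_of_nonneg_left h₁ hC
  have := mul_le_mul_of_nonneg_left h₂ hC
  have := mul_le_mul_of_nonneg_left hB (mul_nonneg hC he)
  have := mul_le_mul_of_nonneg_left hD (mul_nonneg hC he)
  refine le_two_mul_of_le_add_mul hn
    (b := C * n + C * n ^ (p - 1) + C * (K ^ ((2 : ℝ) / 3) + 1) * e) (by linarith) ?_
  rw [h₃] at h
  linarith

end Majorants

theorem majorants_le_of_small {p κ ε C C' K B D η T : ℝ} {M₁ M₂ A : ℝ → ℝ}
    (hp : 1 < p) (hκ₀ : 0 ≤ κ) (hκ₁ : κ ≤ 1 / 2) (hκp : κ ≤ (p - 1) / 2)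
    (hC : 0 ≤ C) (hC' : 0 ≤ C') (hε : 0 < ε) (hε₁ : ε ≤ 1) (he : ε ^ (κ / 2) ≤ 1 / 2)
    (hB : 1 + K * (2 * C') + K ^ 2 + K ^ p ≤ B) (hD : 1 + K ^ ((2 : ℝ) / 3) + B ≤ D)
    (hK₁ : 1 ≤ K) (hK : 2 * (C * (1 + B * ε ^ (κ / 2))) < K)
    (hCη : C * η ≤ 1 / 8) (hCη' : C * η ^ (p - 1) ≤ 1 / 8)
    (hCe : C * (K ^ ((2 : ℝ) / 3) + 1) * ε ^ (κ / 2) ≤ 1 / 4)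
    (hη : 2 * (C * (M₂ 0 + D * ε ^ (κ / 2))) < η)
    (hT : 0 ≤ T) (hM₁c : ContinuousOn M₁ (Icc 0 T)) (hM₂c : ContinuousOn M₂ (Icc 0 T))
    (hnn : ∀ t ∈ Icc 0 T, 0 ≤ M₁ t ∧ 0 ≤ M₂ t ∧ 0 ≤ A t)
    (hM₁0 : M₁ 0 ≤ 1) (hM₂0 : M₂ 0 ≤ η)
    (hM₂ : ∀ t ∈ Icc 0 T,
      M₂ t ≤ C * (M₂ 0 + ε ^ ((1 : ℝ) / 2) * M₁ 0
        + ε ^ ((1 : ℝ) / 3) * M₁ t ^ ((2 : ℝ) / 3) * M₂ t ^ ((1 : ℝ) / 3)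
        + M₂ t ^ 2 + M₂ t ^ p
        + ε ^ (κ / 2) * (1 + M₂ t + M₁ t * A t + M₁ t ^ 2 + M₁ t ^ p)))
    (hM₁ : ∀ t ∈ Icc 0 T,
      M₁ t ≤ C * (M₁ 0 + ε ^ (κ / 2) * (1 + M₁ t * A t + M₁ t ^ 2 + M₁ t ^ p)
        + M₂ t * M₁ t + M₁ t * M₂ t ^ (p - 1)))
    (hA : ∀ t ∈ Icc 0 T,
      A t ≤ C' * (1 + ε * M₁ t * (1 + A t) + ε * M₁ t ^ 2 + ε ^ (2 * p - 2) * M₁ t ^ p))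
    (hM₁u : ∀ t ∈ Icc 0 T, M₁ t ≤ ε ^ (-(κ / 2))) (hAu : ∀ t ∈ Icc 0 T, A t ≤ ε ^ (-(κ / 2))) :
    ∀ t ∈ Icc 0 T, A t ≤ 2 * C' ∧ M₁ t ≤ K ∧ M₂ t ≤ η ∧
      M₁ t ≤ 2 * (C * (M₁ 0 + B * ε ^ (κ / 2))) ∧ M₂ t ≤ 2 * (C * (M₂ 0 + D * ε ^ (κ / 2))) := by
  have hA_le : ∀ t ∈ Icc 0 T, A t ≤ 2 * C' := fun t ht =>
    A_le_two_mul_of_apriori hp hκ₀ hκ₁ hκp hε hε₁ he hC' (hnn t ht).1 (hnn t ht).2.2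
      (hM₁u t ht) (hAu t ht) (hA t ht)
  have himprove : ∀ t ∈ Icc 0 T, M₁ t ≤ K → M₂ t ≤ η →
      M₁ t ≤ 2 * (C * (M₁ 0 + B * ε ^ (κ / 2))) ∧
        M₂ t ≤ 2 * (C * (M₂ 0 + D * ε ^ (κ / 2))) := by
    intro t ht hM₁K hM₂η
    obtain ⟨hm, hn, ha⟩ := hnn t ht
    have hBt : 1 + M₁ t * A t + M₁ t ^ 2 + M₁ t ^ p ≤ B := by
      have := mul_le_mul hM₁K (hA_le t ht) ha (by linarith)
      have := pow_le_pow_left₀ hm hM₁K 2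
      have := rpow_le_rpow hm hM₁K (by linarith : 0 ≤ p)
      linarith
    have hCn : C * M₂ t ≤ 1 / 8 := (mul_le_mul_of_nonneg_left hM₂η hC).trans hCη
    have hCn' : C * M₂ t ^ (p - 1) ≤ 1 / 8 :=
      (mul_le_mul_of_nonneg_left (rpow_le_rpow hn hM₂η (by linarith)) hC).trans hCη'
    exact ⟨M₁_le_two_mul_of_small hC hm (rpow_nonneg hε.le _) hBt (by linarith) (by linarith)
        (hM₁ t ht),
      M₂_le_two_mul_of_small hp hκ₁ hε hε₁ hC hm hM₁K hM₁0 hn hBt hD hCn hCn' hCe (hM₂ t ht)⟩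
  have hbound := isPreconnected_Icc.forall_le_of_le_imp_lt₂ hM₁c hM₂c ⟨le_rfl, hT⟩
    ⟨hM₁0.trans hK₁, hM₂0⟩ fun t ht hM₁K hM₂η => by
      obtain ⟨hM₁t, hM₂t⟩ := himprove t ht hM₁K hM₂η
      exact ⟨(hM₁t.trans (by gcongr)).trans_lt hK, hM₂t.trans_lt hη⟩
  intro t ht
  obtain ⟨hM₁K, hM₂η⟩ := hbound t ht
  exact ⟨hA_le t ht, hM₁K, hM₂η, himprove t ht hM₁K hM₂η⟩

/-- Bootstrap (Corollary 4.2): if the majorants `M₁, M₂, A` satisfy the stated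
system of inequalities with small parameter `ε = β(0)`, and an a priori bound
of size `ε^{-κ/2}`, then in fact `M₁ ≲ M₁(0) + ε^{κ/2}`,
`M₂ ≲ M₂(0) + ε^{κ/2}`, `A, M₁ ≲ 1` and `M₂ ≪ 1`. -/
theorem stmt19 (p : ℝ) (hp : 1 < p) (C C' : ℝ) (hC : 0 < C) (hC' : 0 < C') :
    let κ : ℝ := min (1 / 2) ((p - 1) / 2)
    ∃ C'' > 0, ∀ δ' : ℝ, 0 < δ' → ∃ ε₀ > 0, ∃ δ > 0,
      ∀ ε : ℝ, 0 < ε → ε ≤ ε₀ → ∀ T : ℝ, 0 ≤ T → ∀ M₁ M₂ A : ℝ → ℝ,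
      ContinuousOn M₁ (Set.Icc 0 T) → ContinuousOn M₂ (Set.Icc 0 T) →
      ContinuousOn A (Set.Icc 0 T) →
      MonotoneOn M₁ (Set.Icc 0 T) → MonotoneOn M₂ (Set.Icc 0 T) →
      MonotoneOn A (Set.Icc 0 T) →
      (∀ t ∈ Set.Icc (0 : ℝ) T, 0 ≤ M₁ t ∧ 0 ≤ M₂ t ∧ 0 ≤ A t) →
      M₁ 0 ≤ 1 → A 0 ≤ 1 → M₂ 0 ≤ δ →
      (∀ t ∈ Set.Icc (0 : ℝ) T,
        M₂ t ≤ C * (M₂ 0 + ε ^ ((1 : ℝ) / 2) * M₁ 0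
          + ε ^ ((1 : ℝ) / 3) * M₁ t ^ ((2 : ℝ) / 3) * M₂ t ^ ((1 : ℝ) / 3)
          + M₂ t ^ 2 + M₂ t ^ p
          + ε ^ (κ / 2) * (1 + M₂ t + M₁ t * A t + M₁ t ^ 2 + M₁ t ^ p))) →
      (∀ t ∈ Set.Icc (0 : ℝ) T,
        M₁ t ≤ C * (M₁ 0 + ε ^ (κ / 2) * (1 + M₁ t * A t + M₁ t ^ 2 + M₁ t ^ p)
          + M₂ t * M₁ t + M₁ t * M₂ t ^ (p - 1))) →
      (∀ t ∈ Set.Icc (0 : ℝ) T,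
        A t ≤ C' * (1 + ε * M₁ t * (1 + A t) + ε * M₁ t ^ 2
          + ε ^ (2 * p - 2) * M₁ t ^ p)) →
      (∀ t ∈ Set.Icc (0 : ℝ) T,
        M₁ t ≤ ε ^ (-(κ / 2)) ∧ M₂ t ≤ ε ^ (-(κ / 2)) ∧ A t ≤ ε ^ (-(κ / 2))) →
      ∀ t ∈ Set.Icc (0 : ℝ) T,
        M₁ t ≤ C'' * (M₁ 0 + ε ^ (κ / 2)) ∧
        M₂ t ≤ C'' * (M₂ 0 + ε ^ (κ / 2)) ∧
        M₁ t ≤ C'' ∧ A t ≤ C'' ∧ M₂ t ≤ δ' := by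
  intro κ
  obtain ⟨hκ₀, hκ₁, hκp⟩ : 0 < κ ∧ κ ≤ 1 / 2 ∧ κ ≤ (p - 1) / 2 :=
    ⟨lt_min (by norm_num) (by linarith), min_le_left _ _, min_le_right _ _⟩
  clear_value κ
  set K := 2 * C + 2
  set B := 1 + K * (2 * C') + K ^ 2 + K ^ p
  set D := 1 + K ^ ((2 : ℝ) / 3) + B with hD
  have hK₂₃ : 0 ≤ K ^ ((2 : ℝ) / 3) := by positivity
  have hB₀ : 0 ≤ B := by positivity
  have hBD : B ≤ D := by linarith
  have hD₁ : 1 ≤ D := by linarith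
  have hCD : 0 ≤ 2 * C * D := by positivity
  refine ⟨2 * C * D + K + 2 * C', by positivity, fun δ' hδ' => ?_⟩
  obtain ⟨η, ⟨hη, hηδ'⟩, hCη, hCη'⟩ : ∃ η ∈ Ioo 0 δ', C * η < 1 / 8 ∧ C * η ^ (p - 1) < 1 / 8 :=
    (Eventually.and (Ioo_mem_nhdsGT hδ') ((eventually_mul_lt C (by norm_num)).and
      (eventually_mul_rpow_lt (by linarith) C (by norm_num)))).exists
  obtain ⟨δ, ⟨hδ, hδη⟩, hCδ⟩ : ∃ δ ∈ Ioo 0 η, 2 * C * δ < η / 2 :=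
    (Eventually.and (Ioo_mem_nhdsGT hη) (eventually_mul_lt (2 * C) (half_pos hη))).exists
  have hsmall : ∀ᶠ ε in 𝓝[>] 0, ε ≤ 1 ∧ ε ^ (κ / 2) ≤ 1 / 2 ∧
      C * (K ^ ((2 : ℝ) / 3) + 1) * ε ^ (κ / 2) ≤ 1 / 4 ∧
      2 * (C * (1 + B * ε ^ (κ / 2))) < K ∧ 2 * C * D * ε ^ (κ / 2) < η / 2 := by
    have hκ₂ : 0 < κ / 2 := by positivity
    filter_upwards [Ioc_mem_nhdsGT one_pos, eventually_mul_rpow_lt hκ₂ 1 one_half_pos,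
      eventually_mul_rpow_lt hκ₂ (C * (K ^ ((2 : ℝ) / 3) + 1)) (by norm_num : (0 : ℝ) < 1 / 4),
      eventually_mul_rpow_lt hκ₂ (C * B) one_pos,
      eventually_mul_rpow_lt hκ₂ (2 * C * D) (half_pos hη)] with ε hε₁ he hCe hCB hDe
    exact ⟨hε₁.2, by linarith, hCe.le, by linarith, hDe⟩
  obtain ⟨ε₀, hε₀, hε₀small⟩ := mem_nhdsGT_iff_exists_Ioc_subset.1 hsmall
  refine ⟨ε₀, hε₀, δ, hδ, ?_⟩
  intro ε hε hεε₀ T hT M₁ M₂ A hM₁c hM₂c _ _ _ _ hnn hM₁0 _ hM₂0 hM₂ hM₁ hA hapriori t ht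
  obtain ⟨hε₁, he, hCe, hK, hDe⟩ := hε₀small ⟨hε, hεε₀⟩
  have hCM₂ : 2 * C * M₂ 0 ≤ η / 2 := (mul_le_mul_of_nonneg_left hM₂0 (by positivity)).trans hCδ.le
  obtain ⟨hAt, hM₁K, hM₂η, hM₁t, hM₂t⟩ := majorants_le_of_small (B := B) (D := D) hp hκ₀.le hκ₁
    hκp hC.le hC'.le hε hε₁ he le_rfl le_rfl (by linarith) hK hCη.le hCη'.le hCe (by linarith) hT
    hM₁c hM₂c hnn hM₁0 (hM₂0.trans hδη.le) hM₂ hM₁ hA (fun t ht => (hapriori t ht).1)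
    (fun t ht => (hapriori t ht).2.2) t ht
  have hC'' : 2 * C * D ≤ 2 * C * D + K + 2 * C' := by linarith
  have he₀ : 0 ≤ ε ^ (κ / 2) := rpow_nonneg hε.le _
  exact ⟨le_mul_add_of_le_two_mul (hnn 0 ⟨le_rfl, hT⟩).1 he₀ hC.le hBD hD₁ hC'' hM₁t,
    le_mul_add_of_le_two_mul (hnn 0 ⟨le_rfl, hT⟩).2.1 he₀ hC.le le_rfl hD₁ hC'' hM₂t,
    by linarith, by linarith, by linarith⟩
end
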